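/- arXiv:1012.0942 — 10 statements merged into one kernel-verified Lean document; each statement's English description precedes it below -/
import Mathlib

section
/- Let V be a family of commuting isometries on a Hilbert space H, indexed by a set I. Define M to be the intersection over all N ≥ 1 and all finite sequences k₁,...,k_N in I of the ranges V_{k₁}V_{k₂}···V_{k_N}(H). Then M is a closed subspace of H that is invariant under each V_k and each V_k*, and each V_k restricted to M is a unitary operator on M. -/
/-!
Each word `V k₁ ⋯ V k_N` is an isometry of a complete space, so its range is closed, and so is
the intersection `M` of these ranges. A word beginning with `V i` is `V i` times a shorter word:
since `V i` commutes with every word it maps `M` into `M`, and since it is injective, every point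
of `M` is `V i` of a point of `M`. Finally `(V i)* V i = 1` turns `V i '' M = M` into
`(V i)* '' M = M`.
-/

open ContinuousLinearMap

section Word

variable {ι A : Type*} [Monoid A] (V : ι → A)

def wordProd {N : ℕ} (k : Fin (N + 1) → ι) : A :=
  (List.ofFn fun j => V (k j)).prod

@[simp]
lemma wordProd_single (i : ι) : wordProd V (fun _ : Fin 1 => i) = V i := by
  simp [wordProd]

lemma wordProd_cons (i : ι) {N : ℕ} (k : Fin (N + 1) → ι) :
    wordProd V (Fin.cons i k : Fin (N + 2) → ι) = V i * wordProd V k := by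
  simp [wordProd, List.ofFn_succ]

variable {V} in
lemma commute_wordProd {i : ι} (hi : ∀ j, Commute (V i) (V j)) {N : ℕ} (k : Fin (N + 1) → ι) :
    Commute (V i) (wordProd V k) :=
  Commute.list_prod_right _ _ fun f hf => by
    obtain ⟨j, rfl⟩ := List.mem_ofFn.mp hf
    exact hi (k j)

end Word

lemma isometry_list_prod {R E : Type*} [Semiring R] [PseudoEMetricSpace E] [AddCommMonoid E]
    [Module R E] (L : List (E →L[R] E)) (hL : ∀ f ∈ L, Isometry f) : Isometry (L.prod : E → E) := by
  induction L with
  | nil => exact isometry_id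
  | cons f L ih =>
    rw [List.prod_cons]
    exact (hL f List.mem_cons_self).comp (ih fun g hg => hL g (List.mem_cons_of_mem f hg))

section CommonRange

variable {ι R E : Type*} [Semiring R] [TopologicalSpace E] [AddCommMonoid E] [Module R E]
  (V : ι → E →L[R] E)

def commonRange : Submodule R E :=
  ⨅ (N : ℕ) (k : Fin (N + 1) → ι), LinearMap.range ((wordProd V k : E →L[R] E) : E →ₗ[R] E)

lemma coe_commonRange :
    (commonRange V : Set E) =
      ⋂ (N : ℕ) (k : Fin (N + 1) → ι), Set.range (wordProd V k : E →L[R] E) := by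
  simp [commonRange, LinearMap.coe_range]

variable {V}

lemma mem_commonRange {x : E} :
    x ∈ commonRange V ↔
      ∀ (N : ℕ) (k : Fin (N + 1) → ι), x ∈ Set.range (wordProd V k : E →L[R] E) := by
  simp [← SetLike.mem_coe, coe_commonRange]

lemma image_commonRange_subset {i : ι} (hi : ∀ j, Commute (V i) (V j)) :
    V i '' commonRange V ⊆ commonRange V := by
  rintro _ ⟨x, hx, rfl⟩
  rw [SetLike.mem_coe, mem_commonRange] at hx ⊢
  intro N k
  obtain ⟨z, rfl⟩ := hx N k
  exact ⟨V i z, congr($((commute_wordProd hi k).eq) z).symm⟩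

lemma commonRange_subset_image {i : ι} (hi : Function.Injective (V i)) :
    (commonRange V : Set E) ⊆ V i '' commonRange V := by
  intro y hy
  rw [SetLike.mem_coe, mem_commonRange] at hy
  obtain ⟨x, rfl⟩ : y ∈ Set.range (V i) := by simpa using hy 0 fun _ => i
  refine ⟨x, mem_commonRange.mpr fun N k => ?_, rfl⟩
  obtain ⟨z, hz⟩ := hy (N + 1) (Fin.cons i k)
  rw [wordProd_cons] at hz
  exact ⟨z, hi hz⟩

lemma image_commonRange {i : ι} (hcomm : ∀ j, Commute (V i) (V j))
    (hinj : Function.Injective (V i)) : V i '' commonRange V = commonRange V :=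
  (image_commonRange_subset hcomm).antisymm (commonRange_subset_image hinj)

end CommonRange

lemma isClosed_commonRange {ι R E : Type*} [Semiring R] [EMetricSpace E] [CompleteSpace E]
    [AddCommMonoid E] [Module R E] {V : ι → E →L[R] E} (hV : ∀ i, Isometry (V i)) :
    IsClosed (commonRange V : Set E) := by
  rw [coe_commonRange]
  refine isClosed_iInter fun N => isClosed_iInter fun k => ?_
  refine (isometry_list_prod _ fun f hf => ?_).isClosedEmbedding.isClosed_range
  obtain ⟨j, rfl⟩ := List.mem_ofFn.mp hf
  exact hV (k j)

lemma ContinuousLinearMap.adjoint_image_eq_of_image_eq {𝕜 H : Type*} [RCLike 𝕜]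
    [NormedAddCommGroup H] [InnerProductSpace 𝕜 H] [CompleteSpace H] {u : H →L[𝕜] H}
    (hu : Isometry u) {S : Set H} (hS : u '' S = S) : adjoint u '' S = S := by
  have hleft : adjoint u ∘L u = 1 := (isometry_iff_adjoint_comp_self u).mp hu
  calc adjoint u '' S = adjoint u '' (u '' S) := by rw [hS]
    _ = (adjoint u ∘L u) '' S := by rw [coe_comp, Set.image_comp]
    _ = S := by simp [hleft]

/-- For a family of commuting isometries `V` on a Hilbert space `H`,
the set `M = ⋂_{N≥1} ⋂_{k₁,…,k_N ∈ I} V_{k₁}⋯V_{k_N}(H)` is a closed subspace of `H`,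
invariant under each `V k` and each `(V k)*`, and each `V k` maps `M` onto `M`
(hence restricts to a unitary operator on `M`, being isometric). -/
theorem statement0 (I H : Type*) [NormedAddCommGroup H] [InnerProductSpace ℂ H]
    [CompleteSpace H] (V : I → H →L[ℂ] H)
    (hiso : ∀ i, ∀ x : H, ‖V i x‖ = ‖x‖)
    (hcomm : ∀ i j, V i ∘L V j = V j ∘L V i) :
    ∃ M : Submodule ℂ H,
      (M : Set H) =
        ⋂ (N : ℕ) (k : Fin (N + 1) → I),
          Set.range ((List.ofFn fun j => V (k j)).prod : H → H) ∧
      IsClosed (M : Set H) ∧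
      ∀ i, (V i) '' (M : Set H) = (M : Set H) ∧
        (adjoint (V i)) '' (M : Set H) ⊆ (M : Set H) := by
  have hV : ∀ i, Isometry (V i) := fun i => AddMonoidHomClass.isometry_of_norm _ (hiso i)
  have himage : ∀ i, V i '' commonRange V = commonRange V :=
    fun i => image_commonRange (hcomm i) (hV i).injective
  exact ⟨commonRange V, coe_commonRange V, isClosed_commonRange hV,
    fun i => ⟨himage i, (adjoint_image_eq_of_image_eq (hV i) (himage i)).subset⟩⟩
end

section
/- Let V be a family of commuting isometries on H and let M be the largest reducing subspace on which every V_k restricts to a unitary (as constructed from the intersection of iterated ranges). Then M is the largest invariant subspace of H on which V restricts to a unitary family: if R is any closed subspace invariant under all V_k such that each V_k|R is unitary on R, then R ⊆ M. -/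
open Pointwise

theorem List.prod_smul_set_eq_of_forall {M α : Type*} [Monoid M] [MulAction M α] {s : Set α} :
    ∀ L : List M, (∀ m ∈ L, m • s = s) → L.prod • s = s
  | [], _ => one_smul M s
  | m :: L, h => by
    rw [List.prod_cons, mul_smul, L.prod_smul_set_eq_of_forall fun n hn => h n (.tail m hn),
      h m List.mem_cons_self]

theorem statement1_general (I H : Type*) [NormedAddCommGroup H] [InnerProductSpace ℂ H]
    (V : I → H →L[ℂ] H)
    (R : Submodule ℂ H)
    (hRunitary : ∀ i, (V i) '' (R : Set H) = (R : Set H)) :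
    (R : Set H) ⊆
      ⋂ (N : ℕ) (k : Fin (N + 1) → I),
        Set.range ((List.ofFn fun j => V (k j)).prod : H → H) := by
  refine fun x hx => Set.mem_iInter₂.mpr fun N k => ?_
  have hprod : (List.ofFn fun j => V (k j)).prod • (R : Set H) = R := by
    refine List.prod_smul_set_eq_of_forall _ fun T hT => ?_
    obtain ⟨j, rfl⟩ := List.mem_ofFn.mp hT
    rw [← Set.image_smul]
    exact hRunitary (k j)
  obtain ⟨y, -, hy⟩ := hprod.symm ▸ hx
  exact ⟨y, hy⟩

/-- With `M = ⋂_{N≥1} ⋂_{k₁,…,k_N ∈ I} V_{k₁}⋯V_{k_N}(H)`, the space `M`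
is the largest invariant subspace on which the commuting isometries `V` restrict to
unitaries: if `R` is a closed invariant subspace with each `V k` mapping `R` onto `R`,
then `R ⊆ M`. -/
theorem statement1 (I H : Type*) [NormedAddCommGroup H] [InnerProductSpace ℂ H]
    [CompleteSpace H] (V : I → H →L[ℂ] H)
    (hiso : ∀ i, ∀ x : H, ‖V i x‖ = ‖x‖)
    (hcomm : ∀ i j, V i ∘L V j = V j ∘L V i)
    (R : Submodule ℂ H) (hRclosed : IsClosed (R : Set H))
    (hRunitary : ∀ i, (V i) '' (R : Set H) = (R : Set H)) :
    (R : Set H) ⊆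
      ⋂ (N : ℕ) (k : Fin (N + 1) → I),
        Set.range ((List.ofFn fun j => V (k j)).prod : H → H) :=
  statement1_general I H V R hRunitary
end

section
/- Let W = (W₀, W₁) be a pair of commuting isometries on a Hilbert space K, and suppose the pair is irreducible (the only closed subspaces reducing both W₀ and W₁ are {0} and K) with K ≠ {0}. If W₀ is a unitary operator, then W₀ is a scalar multiple of the identity. -/
/-!
A unitary commuting with `W₁` also commutes with `W₁*` (the unitary case of Fuglede's theorem),
so `W₀` lies in the commutant of `{W₀, W₁, W₀*, W₁*}`, a closed `*`-subalgebra, and with it every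
`f(W₀)` for `f` continuous. If `G` is in this commutant, the closure of its range reduces the
pair, so by irreducibility `G = 0` or `G` has dense range; in particular `F G = 0` forces `F = 0`
or `G = 0`. Were there two points in the spectrum of `W₀`, bump functions around them with
disjoint supports would give `f(W₀) g(W₀) = 0` with both factors nonzero. Hence the spectrum is a
single point `c`, and `W₀ = c` by the continuous functional calculus.
-/

open ContinuousLinearMap

lemma Commute.star_right_of_mem_unitary {R : Type*} [Monoid R] [StarMul R] {u a : R}
    (hu : u ∈ unitary R) (h : Commute u a) : Commute u (star a) := by
  rw [commute_unitary_iff_star_left_conjugate hu]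
  calc star u * star a * u = star a * star u * u := by rw [h.star_star.eq]
    _ = star a := by rw [mul_assoc, Unitary.star_mul_self_of_mem hu, mul_one]

lemma StarSubalgebra.cfc_mem_centralizer {A : Type*} [CStarAlgebra A] {s : Set A} {a : A}
    (ha : a ∈ StarSubalgebra.centralizer ℂ s) (f : ℂ → ℂ) :
    cfc f a ∈ StarSubalgebra.centralizer ℂ s :=
  have : IsClosed (StarSubalgebra.centralizer ℂ s : Set A) := Set.isClosed_centralizer _
  cfc_mem f ha

lemma IsStarNormal.spectrum_subsingleton_of_cfc_mul_eq_zero {A : Type*} [CStarAlgebra A]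
    {a : A} [IsStarNormal a]
    (h : ∀ f g : ℂ → ℂ, cfc f a * cfc g a = 0 → cfc f a = 0 ∨ cfc g a = 0) :
    (spectrum ℂ a).Subsingleton := by
  intro x hx y hy
  by_contra hne
  have hxy : 0 < dist x y := dist_pos.2 hne
  obtain ⟨r, hr, hrxy⟩ : ∃ r, 0 < r ∧ r < dist x y := ⟨dist x y / 2, half_pos hxy, half_lt_self hxy⟩
  -- `f` and `g` are the positive and negative parts of `r - dist · x`.
  let f : ℂ → ℂ := fun z ↦ ((max (r - dist z x) 0 : ℝ) : ℂ)
  let g : ℂ → ℂ := fun z ↦ ((max (dist z x - r) 0 : ℝ) : ℂ)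
  have hfg : cfc f a * cfc g a = 0 := by
    rw [← cfc_mul f g a, ← cfc_zero ℂ a]
    refine cfc_congr fun z _ ↦ ?_
    rcases le_total r (dist z x) with hz | hz <;> simp [f, g, hz]
  have cfc_ne_zero {φ : ℂ → ℂ} (hφ : Continuous φ) {z : ℂ} (hz : z ∈ spectrum ℂ a)
      (hφz : φ z ≠ 0) : cfc φ a ≠ 0 := by
    intro h0
    have : (spectrum ℂ a).EqOn φ 0 :=
      eqOn_of_cfc_eq_cfc (h0.trans (cfc_zero ℂ a).symm) hφ.continuousOn
    exact hφz (this hz)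
  rcases h f g hfg with hf | hg
  · exact cfc_ne_zero (φ := f) (by fun_prop) hx (by simp [f, hr]) hf
  · refine cfc_ne_zero (φ := g) (by fun_prop) hy ?_ hg
    simpa [g, dist_comm y x] using hrxy

namespace ContinuousLinearMap

variable {R M : Type*} [Semiring R] [AddCommMonoid M] [TopologicalSpace M] [Module R M]
  [ContinuousAdd M] [ContinuousConstSMul R M]

lemma topologicalClosure_range_le_comap_of_commute {T F : M →L[R] M} (h : Commute T F) :
    (LinearMap.range (F : M →ₗ[R] M)).topologicalClosure ≤
      (LinearMap.range (F : M →ₗ[R] M)).topologicalClosure.comap (T : M →ₗ[R] M) := by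
  refine Submodule.topologicalClosure_minimal _ ?_
    ((Submodule.isClosed_topologicalClosure _).preimage T.continuous)
  rintro _ ⟨x, rfl⟩
  refine Submodule.le_topologicalClosure _ ⟨T x, ?_⟩
  simpa using congr($(h.eq) x).symm

lemma eq_zero_or_eq_zero_of_mul_eq_zero_of_mem_centralizer [T1Space M] {S : Set (M →L[R] M)}
    (hS : ∀ N : Submodule R M, IsClosed (N : Set M) → (∀ T ∈ S, ∀ x ∈ N, T x ∈ N) →
      N = ⊥ ∨ N = ⊤)
    {F G : M →L[R] M} (hFG : F * G = 0) (hG : G ∈ S.centralizer) : F = 0 ∨ G = 0 := by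
  rcases hS _ (Submodule.isClosed_topologicalClosure _) fun T hT ↦
    topologicalClosure_range_le_comap_of_commute (hG T hT) with hbot | htop
  · right
    ext x
    simpa [hbot] using Submodule.le_topologicalClosure (LinearMap.range (G : M →ₗ[R] M)) ⟨x, rfl⟩
  · left
    have hker : (LinearMap.range (G : M →ₗ[R] M)).topologicalClosure ≤
        LinearMap.ker (F : M →ₗ[R] M) :=
      Submodule.topologicalClosure_minimal _
        (by rintro _ ⟨x, rfl⟩; simpa using congr($hFG x)) F.isClosed_ker
    ext x
    simpa using hker (htop ▸ Submodule.mem_top : x ∈ _)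

end ContinuousLinearMap

theorem statement3_general (K : Type*) [NormedAddCommGroup K] [InnerProductSpace ℂ K]
    [CompleteSpace K] [Nontrivial K]
    (W₀ W₁ : K →L[ℂ] K)
    (hcomm : W₀ ∘L W₁ = W₁ ∘L W₀)
    (hirr : ∀ M : Submodule ℂ K, IsClosed (M : Set K) →
      (∀ x ∈ M, W₀ x ∈ M ∧ W₁ x ∈ M ∧ adjoint W₀ x ∈ M ∧ adjoint W₁ x ∈ M) →
      M = ⊥ ∨ M = ⊤)
    (hunit : W₀ ∘L adjoint W₀ = 1 ∧ adjoint W₀ ∘L W₀ = 1) :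
    ∃ c : ℂ, W₀ = c • (1 : K →L[ℂ] K) := by
  have hW₀ : W₀ ∈ unitary (K →L[ℂ] K) := by
    rw [Unitary.mem_iff, star_eq_adjoint]
    exact hunit.symm
  have : IsStarNormal W₀ := isStarNormal_of_mem_unitary hW₀
  have hW₀C : W₀ ∈ StarSubalgebra.centralizer ℂ {W₀, W₁} := by
    rw [StarSubalgebra.mem_centralizer_iff]
    rintro T (rfl | rfl)
    · exact ⟨rfl, (commute_unitary_star_self hW₀).eq⟩
    · have hcomm' : Commute T W₀ := hcomm.symm
      exact ⟨hcomm'.eq, (hcomm'.symm.star_right_of_mem_unitary hW₀).eq.symm⟩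
  have hirr' : ∀ M : Submodule ℂ K, IsClosed (M : Set K) →
      (∀ T ∈ ({W₀, W₁} ∪ star {W₀, W₁} : Set (K →L[ℂ] K)), ∀ x ∈ M, T x ∈ M) →
      M = ⊥ ∨ M = ⊤ := fun M hM hinv ↦
    hirr M hM fun x hx ↦ ⟨hinv _ (by simp) x hx, hinv _ (by simp) x hx,
      hinv _ (by simp [← star_eq_adjoint]) x hx, hinv _ (by simp [← star_eq_adjoint]) x hx⟩
  have hspec : (spectrum ℂ W₀).Subsingleton :=
    IsStarNormal.spectrum_subsingleton_of_cfc_mul_eq_zero fun f g hfg ↦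
      eq_zero_or_eq_zero_of_mul_eq_zero_of_mem_centralizer hirr' hfg
        (StarSubalgebra.cfc_mem_centralizer hW₀C g)
  obtain ⟨c, hc⟩ := spectrum.nonempty W₀
  refine ⟨c, ?_⟩
  rw [CFC.eq_algebraMap_of_spectrum_subset_singleton W₀ c (hspec.eq_singleton_of_mem hc).subset,
    Algebra.algebraMap_eq_smul_one]

/-- If `(W₀, W₁)` is an irreducible pair of commuting isometries on a
nonzero Hilbert space `K` and `W₀` is unitary, then `W₀` is a scalar multiple of the
identity. Irreducibility: the only closed subspaces invariant under `W₀, W₁, W₀*, W₁*`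
are `{0}` and `K`. -/
theorem statement3 (K : Type*) [NormedAddCommGroup K] [InnerProductSpace ℂ K]
    [CompleteSpace K] [Nontrivial K]
    (W₀ W₁ : K →L[ℂ] K)
    (h0 : ∀ x, ‖W₀ x‖ = ‖x‖) (h1 : ∀ x, ‖W₁ x‖ = ‖x‖)
    (hcomm : W₀ ∘L W₁ = W₁ ∘L W₀)
    (hirr : ∀ M : Submodule ℂ K, IsClosed (M : Set K) →
      (∀ x ∈ M, W₀ x ∈ M ∧ W₁ x ∈ M ∧ adjoint W₀ x ∈ M ∧ adjoint W₁ x ∈ M) →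
      M = ⊥ ∨ M = ⊤)
    (hunit : W₀ ∘L adjoint W₀ = 1 ∧ adjoint W₀ ∘L W₀ = 1) :
    ∃ c : ℂ, W₀ = c • (1 : K →L[ℂ] K) :=
  statement3_general K W₀ W₁ hcomm hirr hunit
end

section
/- Let V₀ be an isometry on H, A a contraction commuting with V₀, E = ker V₀*, and Θ(z) = P_E(I − zV₀*)⁻¹A|E the associated characteristic function. Then sup_{|z|<1} ‖Θ(z)‖ ≤ ‖A‖; in particular Θ(z) is a contraction on E for every z in the open unit disk when ‖A‖ ≤ 1. -/
/-!
Work in the C*-algebra of bounded operators, with `p = 1 - v v*` and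
`q = ((1 - z v*)⁻¹)* p = (1 - z̄ v)⁻¹ p`. Since `v* p = 0`, the element `q` satisfies
`q = p + z̄ v q` and `v* q = z̄ q`, whence `(1 - |z|²) q* q = p`. As `a` commutes with `v`,
`a p = (1 - z̄ v) a q`, and `p (1 - z v*)⁻¹ (1 - z̄ v) = (1 - |z|²) q*`, so
`Θ(z) = (1 - |z|²) q* a q`. The C*-identity then gives
`‖Θ(z)‖ ≤ (1 - |z|²) ‖q‖² ‖a‖ = ‖p‖ ‖a‖ ≤ ‖a‖`.
-/

open ComplexConjugate

namespace CStarAlgebra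

variable {𝒜 : Type*} [CStarAlgebra 𝒜] {v : 𝒜}

theorem isStarProjection_one_sub_mul_star (hv : star v * v = 1) :
    IsStarProjection (1 - v * star v) :=
  IsStarProjection.one_sub
    { isIdempotentElem := by
        rw [IsIdempotentElem, mul_assoc, ← mul_assoc (star v), hv, one_mul]
      isSelfAdjoint := by simp [IsSelfAdjoint, star_mul] }

theorem star_mul_one_sub_mul_star (hv : star v * v = 1) : star v * (1 - v * star v) = 0 := by
  rw [mul_sub, mul_one, ← mul_assoc, hv, one_mul, sub_self]

theorem one_sub_mul_star_mul (hv : star v * v = 1) : (1 - v * star v) * v = 0 := by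
  rw [sub_mul, one_mul, mul_assoc, hv, mul_one, sub_self]

theorem norm_le_one_of_star_mul_self_eq_one (hv : star v * v = 1) : ‖v‖ ≤ 1 := by
  have h : ‖v‖ * ‖v‖ ≤ 1 := by
    rw [← CStarRing.norm_star_mul_self, hv]
    exact IsStarProjection.norm_le _ (IsStarProjection.one 𝒜)
  nlinarith [norm_nonneg v]

theorem isUnit_one_sub_smul_star (hv : star v * v = 1) {z : ℂ} (hz : ‖z‖ < 1) :
    IsUnit (1 - z • star v) := by
  refine (Units.oneSub _ ?_).isUnit
  rw [norm_smul, norm_star]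
  exact (mul_le_of_le_one_right (norm_nonneg z)
    (norm_le_one_of_star_mul_self_eq_one hv)).trans_lt hz

section

variable {z : ℂ} {q : 𝒜}

theorem eq_add_smul_mul_of_one_sub_smul_mul_eq (hq : (1 - conj z • v) * q = 1 - v * star v) :
    q = (1 - v * star v) + conj z • (v * q) := by
  rw [← hq, sub_mul, one_mul, smul_mul_assoc, sub_add_cancel]

theorem star_mul_eq_smul_of_one_sub_smul_mul_eq (hv : star v * v = 1)
    (hq : (1 - conj z • v) * q = 1 - v * star v) : star v * q = conj z • q := by
  conv_lhs => rw [eq_add_smul_mul_of_one_sub_smul_mul_eq hq]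
  rw [mul_add, star_mul_one_sub_mul_star hv, zero_add, mul_smul_comm, ← mul_assoc, hv,
    one_mul]

theorem one_sub_mul_star_mul_eq_of_one_sub_smul_mul_eq (hv : star v * v = 1)
    (hq : (1 - conj z • v) * q = 1 - v * star v) : (1 - v * star v) * q = 1 - v * star v := by
  conv_lhs => rw [eq_add_smul_mul_of_one_sub_smul_mul_eq hq]
  rw [mul_add, (isStarProjection_one_sub_mul_star hv).isIdempotentElem.eq, mul_smul_comm,
    ← mul_assoc, one_sub_mul_star_mul hv, zero_mul, smul_zero, add_zero]

theorem smul_star_mul_self_of_one_sub_smul_mul_eq (hv : star v * v = 1)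
    (hq : (1 - conj z • v) * q = 1 - v * star v) :
    (1 - conj z * z) • (star q * q) = 1 - v * star v := by
  have hp := isStarProjection_one_sub_mul_star hv
  have hqp : star q * (1 - v * star v) = 1 - v * star v := by
    have h := congrArg star (one_sub_mul_star_mul_eq_of_one_sub_smul_mul_eq hv hq)
    rwa [star_mul, hp.isSelfAdjoint.star_eq] at h
  have hqv : star q * v = z • star q := by
    rw [← star_star v, ← star_mul, star_mul_eq_smul_of_one_sub_smul_mul_eq hv hq, star_smul,
      Complex.star_def, Complex.conj_conj]
  have hqq : star q * q = (1 - v * star v) + (conj z * z) • (star q * q) := calc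
    star q * q = star q * ((1 - v * star v) + conj z • (v * q)) :=
      congrArg _ (eq_add_smul_mul_of_one_sub_smul_mul_eq hq)
    _ = _ := by rw [mul_add, hqp, mul_smul_comm, ← mul_assoc, hqv, smul_mul_assoc, smul_smul]
  rw [sub_smul, one_smul, sub_eq_iff_eq_add]
  exact hqq

end

theorem one_sub_smul_mul_star_mul_eq {r b : 𝒜} {z : ℂ} (hr : r * (1 - z • star v) = 1) :
    (1 - conj z • v) * (star r * b) = b := by
  have h := congrArg star hr
  rw [star_mul, star_sub, star_one, star_smul, star_star, Complex.star_def] at h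
  rw [← mul_assoc, h, one_mul]

theorem one_sub_mul_star_mul_mul_mul_eq {r a : 𝒜} {z : ℂ} (hv : star v * v = 1)
    (hr : r * (1 - z • star v) = 1) (ha : Commute a v) :
    (1 - v * star v) * (r * (a * (1 - v * star v))) =
      (1 - conj z * z) •
        (star (star r * (1 - v * star v)) * (a * (star r * (1 - v * star v)))) := by
  have hp := isStarProjection_one_sub_mul_star hv
  set q := star r * (1 - v * star v)
  have hq : (1 - conj z • v) * q = 1 - v * star v := one_sub_smul_mul_star_mul_eq hr
  have hstar_q : star q = (1 - v * star v) * r := by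
    rw [star_mul, star_star, hp.isSelfAdjoint.star_eq]
  have hq_mul : star q * (1 - conj z • v) = (1 - conj z * z) • star q := by
    have h : (1 - z • star v) * q = (1 - z * conj z) • q := by
      rw [sub_mul, one_mul, smul_mul_assoc, star_mul_eq_smul_of_one_sub_smul_mul_eq hv hq,
        smul_smul, sub_smul, one_smul]
    have h' := congrArg star h
    rwa [star_mul, star_sub, star_one, star_smul, star_smul, star_star, Complex.star_def,
      map_sub, map_one, map_mul, Complex.conj_conj] at h'
  have ha' : a * (1 - conj z • v) = (1 - conj z • v) * a := by
    rw [mul_sub, sub_mul, mul_one, one_mul, mul_smul_comm, smul_mul_assoc, ha.eq]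
  calc (1 - v * star v) * (r * (a * (1 - v * star v)))
      = star q * (a * ((1 - conj z • v) * q)) := by rw [hq, hstar_q, mul_assoc]
    _ = (star q * (1 - conj z • v)) * (a * q) := by
        rw [← mul_assoc a, ha', mul_assoc, mul_assoc]
    _ = _ := by rw [hq_mul, smul_mul_assoc]

theorem norm_one_sub_mul_star_mul_ringInverse_mul_le {a : 𝒜} {z : ℂ} (hv : star v * v = 1)
    (ha : Commute a v) (hz : ‖z‖ < 1) :
    ‖(1 - v * star v) * (Ring.inverse (1 - z • star v) * (a * (1 - v * star v)))‖ ≤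
      ‖a‖ := by
  set q := star (Ring.inverse (1 - z • star v)) * (1 - v * star v)
  have hr := Ring.inverse_mul_cancel _ (isUnit_one_sub_smul_star hv hz)
  have hq : (1 - conj z • v) * q = 1 - v * star v := one_sub_smul_mul_star_mul_eq hr
  calc ‖(1 - v * star v) * (Ring.inverse (1 - z • star v) * (a * (1 - v * star v)))‖
      = ‖1 - conj z * z‖ * ‖star q * (a * q)‖ := by
        rw [one_sub_mul_star_mul_mul_mul_eq hv hr ha, norm_smul]
    _ ≤ ‖1 - conj z * z‖ * (‖star q‖ * (‖a‖ * ‖q‖)) := by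
        gcongr
        exact (norm_mul_le _ _).trans (by gcongr; exact norm_mul_le _ _)
    _ = ‖(1 - conj z * z) • (star q * q)‖ * ‖a‖ := by
        rw [norm_smul, CStarRing.norm_star_mul_self']; ring
    _ ≤ ‖a‖ := by
        rw [smul_star_mul_self_of_one_sub_smul_mul_eq hv hq]
        exact mul_le_of_le_one_left (norm_nonneg a)
          ((isStarProjection_one_sub_mul_star hv).norm_le _)

end CStarAlgebra

open ContinuousLinearMap

/-- With `V₀` an isometry on `H`, `A ∈ {V₀}'` a contraction,
`P = I - V₀V₀*` the orthogonal projection onto `E = ker V₀*`, and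
`Θ(z) = P (I - zV₀*)⁻¹ A P` the characteristic function, we have
`‖Θ(z)‖ ≤ ‖A‖ ≤ 1` for every `z` in the open unit disk; in particular each `Θ(z)`
is a contraction. -/
theorem statement7 (H : Type*) [NormedAddCommGroup H] [InnerProductSpace ℂ H]
    [CompleteSpace H] (V₀ A : H →L[ℂ] H)
    (hiso : ∀ x, ‖V₀ x‖ = ‖x‖) (hA : ‖A‖ ≤ 1) (hcomm : A ∘L V₀ = V₀ ∘L A) :
    ∀ z ∈ Metric.ball (0 : ℂ) 1,
      ‖(1 - V₀ ∘L adjoint V₀) ∘L Ring.inverse (1 - z • adjoint V₀) ∘L A ∘L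
          (1 - V₀ ∘L adjoint V₀)‖ ≤ ‖A‖ ∧
      ‖(1 - V₀ ∘L adjoint V₀) ∘L Ring.inverse (1 - z • adjoint V₀) ∘L A ∘L
          (1 - V₀ ∘L adjoint V₀)‖ ≤ 1 := by
  intro z hz
  have hv : star V₀ * V₀ = 1 := (norm_map_iff_adjoint_comp_self V₀).mp hiso
  have hΘ := CStarAlgebra.norm_one_sub_mul_star_mul_ringInverse_mul_le hv hcomm
    (mem_ball_zero_iff.mp hz)
  simp only [star_eq_adjoint, mul_def] at hΘ
  exact ⟨hΘ, hΘ.trans hA⟩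
end

section
/- Let Θ : 𝔻 → L(E) be an analytic function with ‖Θ(z)‖ ≤ 1 for all z ∈ 𝔻, and suppose E₀ ⊆ E is a closed subspace invariant under Θ(0) such that Θ(0)|E₀ is unitary on E₀ (i.e., Θ(0) maps E₀ isometrically onto E₀). Then E₀ reduces Θ(z) for every z ∈ 𝔻, and Θ(z)|E₀ = Θ(0)|E₀ for all z. -/
open ContinuousLinearMap

/-!
On `E₀` the value `Θ 0` is isometric, so for `x ∈ E₀` the holomorphic map `w ↦ Θ w x` attains
its maximal possible norm `‖x‖` at the interior point `0`; by the maximum modulus principle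
(valid for values in a strictly convex space) it is constant. Hence `Θ z` agrees with `Θ 0` on
`E₀`, maps `E₀` onto itself and is isometric there. A contraction `T` isometric at `u` satisfies
`T† T u = u`, so `⟪T u, T y⟫ = ⟪u, y⟫`, and `Θ z` preserves `E₀ᗮ` as well.
-/

theorem eq_of_norm_le_of_norm_sq_le_re_inner {𝕜 E : Type*} [RCLike 𝕜] [NormedAddCommGroup E]
    [InnerProductSpace 𝕜 E] {a b : E} (hnorm : ‖a‖ ≤ ‖b‖)
    (hinner : ‖b‖ ^ 2 ≤ RCLike.re (inner 𝕜 a b)) : a = b := by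
  have hsq : ‖a - b‖ ^ 2 ≤ 0 := by
    rw [@norm_sub_sq 𝕜]
    nlinarith [norm_nonneg a]
  rw [← sub_eq_zero, ← norm_eq_zero]
  exact pow_eq_zero_iff two_ne_zero |>.mp (le_antisymm hsq (sq_nonneg _))

theorem Complex.eqOn_apply_of_norm_le_one_of_norm_apply_eq {F G : Type*}
    [NormedAddCommGroup F] [NormedSpace ℂ F] [NormedAddCommGroup G] [NormedSpace ℂ G]
    [StrictConvexSpace ℝ G] {Θ : ℂ → F →L[ℂ] G} {U : Set ℂ} {c : ℂ} (hU : IsPreconnected U)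
    (hUo : IsOpen U) (hd : DifferentiableOn ℂ Θ U) (hΘ : ∀ w ∈ U, ‖Θ w‖ ≤ 1) (hcU : c ∈ U)
    {x : F} (hx : ‖Θ c x‖ = ‖x‖) : Set.EqOn (fun w ↦ Θ w x) (fun _ ↦ Θ c x) U := by
  have hmax : IsMaxOn (norm ∘ fun w ↦ Θ w x) U c := fun w hw ↦ by
    simpa [hx] using (Θ w).le_of_opNorm_le (hΘ w hw) x
  exact eqOn_of_isPreconnected_of_isMaxOn_norm hU hUo
    (fun w hw ↦ ((hd w hw).clm_apply (differentiableWithinAt_const x))) hcU hmax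

namespace ContinuousLinearMap

variable {𝕜 E : Type*} [RCLike 𝕜] [NormedAddCommGroup E] [InnerProductSpace 𝕜 E]
  [CompleteSpace E]

theorem adjoint_apply_apply_eq_of_norm_apply_eq {F : Type*} [NormedAddCommGroup F]
    [InnerProductSpace 𝕜 F] [CompleteSpace F] {T : E →L[𝕜] F} (hT : ‖T‖ ≤ 1) {u : E}
    (hu : ‖T u‖ = ‖u‖) : adjoint T (T u) = u := by
  apply eq_of_norm_le_of_norm_sq_le_re_inner (𝕜 := 𝕜)
  · calc ‖adjoint T (T u)‖ ≤ ‖T‖ * ‖T u‖ := by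
          simpa only [LinearIsometryEquiv.norm_map] using (adjoint T).le_opNorm (T u)
      _ ≤ ‖u‖ := by rw [hu]; exact mul_le_of_le_one_left (norm_nonneg u) hT
  · rw [adjoint_inner_left, inner_self_eq_norm_sq, hu]

theorem mapsTo_orthogonal {T : E →L[𝕜] E} (hT : ‖T‖ ≤ 1) {K : Submodule 𝕜 E}
    (hisom : ∀ u ∈ K, ‖T u‖ = ‖u‖) (hsurj : (K : Set E) ⊆ T '' K) :
    Set.MapsTo T Kᗮ Kᗮ := by
  intro y hy
  rw [SetLike.mem_coe, Submodule.mem_orthogonal]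
  rintro _ hv
  obtain ⟨u, hu, rfl⟩ := hsurj hv
  rw [← adjoint_inner_left, adjoint_apply_apply_eq_of_norm_apply_eq hT (hisom u hu)]
  exact (Submodule.mem_orthogonal K y).mp hy u hu

end ContinuousLinearMap

theorem statement9_general (E : Type*) [NormedAddCommGroup E] [InnerProductSpace ℂ E]
    [CompleteSpace E] (Θ : ℂ → E →L[ℂ] E)
    (hana : ∀ z ∈ Metric.ball (0 : ℂ) 1, AnalyticAt ℂ Θ z)
    (hcontr : ∀ z ∈ Metric.ball (0 : ℂ) 1, ‖Θ z‖ ≤ 1)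
    (E₀ : Submodule ℂ E)
    (hsurj : Θ 0 '' (E₀ : Set E) = (E₀ : Set E))
    (hisom : ∀ x ∈ E₀, ‖Θ 0 x‖ = ‖x‖) :
    ∀ z ∈ Metric.ball (0 : ℂ) 1,
      (∀ x ∈ E₀, Θ z x = Θ 0 x) ∧
      (∀ x ∈ E₀, Θ z x ∈ E₀) ∧
      (∀ x ∈ E₀ᗮ, Θ z x ∈ E₀ᗮ) := by
  have : StrictConvexSpace ℝ E := by
    let := InnerProductSpace.rclikeToReal ℂ E
    infer_instance
  intro z hz
  have hfix : Set.EqOn (Θ z) (Θ 0) E₀ := fun x hx ↦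
    Complex.eqOn_apply_of_norm_le_one_of_norm_apply_eq (convex_ball 0 1).isPreconnected
      Metric.isOpen_ball (AnalyticOnNhd.differentiableOn hana) hcontr (Metric.mem_ball_self one_pos)
      (hisom x hx) hz
  have himage : Θ z '' E₀ = E₀ := hfix.image_eq.trans hsurj
  refine ⟨hfix, fun x hx ↦ himage.subset (Set.mem_image_of_mem _ hx), ?_⟩
  refine mapsTo_orthogonal (hcontr z hz) (fun x hx ↦ ?_) himage.superset
  rw [hfix hx, hisom x hx]

/-- Let `Θ : 𝔻 → L(E)` be analytic and pointwise contractive, and let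
`E₀ ⊆ E` be a closed subspace invariant under `Θ(0)` on which `Θ(0)` restricts to a
unitary (it maps `E₀` isometrically onto `E₀`). Then for every `z` in the disk, `E₀`
reduces `Θ(z)` and `Θ(z)|E₀ = Θ(0)|E₀`. -/
theorem statement9 (E : Type*) [NormedAddCommGroup E] [InnerProductSpace ℂ E]
    [CompleteSpace E] (Θ : ℂ → E →L[ℂ] E)
    (hana : ∀ z ∈ Metric.ball (0 : ℂ) 1, AnalyticAt ℂ Θ z)
    (hcontr : ∀ z ∈ Metric.ball (0 : ℂ) 1, ‖Θ z‖ ≤ 1)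
    (E₀ : Submodule ℂ E) (hE₀ : IsClosed (E₀ : Set E))
    (hsurj : Θ 0 '' (E₀ : Set E) = (E₀ : Set E))
    (hisom : ∀ x ∈ E₀, ‖Θ 0 x‖ = ‖x‖) :
    ∀ z ∈ Metric.ball (0 : ℂ) 1,
      (∀ x ∈ E₀, Θ z x = Θ 0 x) ∧
      (∀ x ∈ E₀, Θ z x ∈ E₀) ∧
      (∀ x ∈ E₀ᗮ, Θ z x ∈ E₀ᗮ) :=
  statement9_general E Θ hana hcontr E₀ hsurj hisom
end

section
/- Let θ₁, θ₂ be nonconstant inner functions in H^∞ of the unit disk, E a nonzero Hilbert space, and suppose there exists an injective bounded operator X on H²(E) with dense range such that X commutes with the shift S_E and X T_{θ₁·I_E} = T_{θ₂·I_E} X, where T_{θ·I_E} is multiplication by θ(z)I_E. Then θ₁ = θ₂. -/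
/-!
An operator `X` commuting with the shift is determined by the sequence `Ξⱼ e = (X e)ⱼ` of its
values on constants, and acts on `f` as the convolution of `Ξ` with the Taylor coefficients
of `f`. Evaluating `X T_{θ₁} = T_{θ₂} X` on a constant `e` therefore gives
`(θ₁ - θ₂) · Ξ e = 0` as a product of power series. Power series with coefficients in a
vector space have no zero divisors and `Ξ e ≠ 0` by injectivity, so `θ₁` and `θ₂` have the
same Taylor coefficients at `0` and agree on the disk.
-/

open ContinuousLinearMap
open scoped ENNReal

theorem eq_zero_of_forall_sum_range_smul_eq_zero {R M : Type*} [Semiring R]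
    [IsCancelMulZero R] [AddCommMonoid M] [Module R M] [Module.IsTorsionFree R M]
    {d : ℕ → R} {v : ℕ → M} (hd : d ≠ 0)
    (h : ∀ n, ∑ k ∈ Finset.range (n + 1), d k • v (n - k) = 0) : v = 0 := by
  classical
  have hex : ∃ m, d m ≠ 0 := Function.ne_iff.mp hd
  set m := Nat.find hex
  have hdm : d m ≠ 0 := Nat.find_spec hex
  have hlt : ∀ k < m, d k = 0 := fun k hk => not_not.mp (Nat.find_min hex hk)
  funext j
  induction j using Nat.strong_induction_on with
  | _ j ih =>
    have hsum : ∑ k ∈ Finset.range (m + j + 1), d k • v (m + j - k) = d m • v j := by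
      rw [Finset.sum_eq_single_of_mem m (by simp), Nat.add_sub_cancel_left]
      intro k hk hkm
      rcases lt_or_gt_of_ne hkm with hk' | hk'
      · rw [hlt k hk', zero_smul]
      · rw [ih (m + j - k) (by simp at hk; omega), Pi.zero_apply, smul_zero]
    exact (smul_eq_zero_iff_right hdm).mp (hsum ▸ h (m + j))

section Shift

variable {𝕜 E : Type*} [NormedField 𝕜] [NormedAddCommGroup E] [NormedSpace 𝕜 E]
  {p : ℝ≥0∞} [Fact (1 ≤ p)]

def IsShift (S : lp (fun _ : ℕ => E) p →L[𝕜] lp (fun _ : ℕ => E) p) : Prop :=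
  ∀ f, S f 0 = 0 ∧ ∀ n, S f (n + 1) = f n

def IsAnalyticToeplitz (c : ℕ → 𝕜)
    (T : lp (fun _ : ℕ => E) p →L[𝕜] lp (fun _ : ℕ => E) p) : Prop :=
  ∀ f n, T f n = ∑ k ∈ Finset.range (n + 1), c k • f (n - k)

variable {S X : lp (fun _ : ℕ => E) p →L[𝕜] lp (fun _ : ℕ => E) p}

theorem IsShift.pow_apply (hS : IsShift S) (i : ℕ) (f : lp (fun _ : ℕ => E) p) (n : ℕ) :
    (S ^ i) f n = if i ≤ n then f (n - i) else 0 := by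
  induction i generalizing n with
  | zero => simp
  | succ i ih =>
    rw [pow_succ', mul_apply_eq_comp]
    cases n with
    | zero => simp [(hS _).1]
    | succ n =>
      rw [(hS _).2, ih, Nat.succ_sub_succ]
      exact if_congr (by omega) rfl rfl

theorem IsShift.single_eq_pow_apply (hS : IsShift S) (i : ℕ) (e : E) :
    lp.single p i e = (S ^ i) (lp.single p 0 e) := by
  ext n
  rw [hS.pow_apply]
  by_cases hni : n = i
  · subst hni
    simp
  · rw [lp.single_apply_ne _ _ _ hni]
    split_ifs with h
    · rw [lp.single_apply_ne _ _ _ (by omega)]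
    · rfl

theorem IsShift.apply_eq_sum_of_commute (hS : IsShift S) (hp : p ≠ ⊤) (hXS : Commute X S)
    (f : lp (fun _ : ℕ => E) p) (n : ℕ) :
    X f n = ∑ i ∈ Finset.range (n + 1), X (lp.single p 0 (f i)) (n - i) := by
  have hX : ∀ i, X (lp.single p i (f i)) n =
      if i ≤ n then X (lp.single p 0 (f i)) (n - i) else 0 := fun i => by
    rw [hS.single_eq_pow_apply, ← comp_apply, ← mul_def, (hXS.pow_right i).eq, mul_def,
      comp_apply, hS.pow_apply]
  have hsum : HasSum (fun i => X (lp.single p i (f i)) n) (X f n) :=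
    ((lp.hasSum_single hp f).mapL X).mapL (lp.evalCLM 𝕜 (fun _ : ℕ => E) p n)
  rw [hsum.unique (hasSum_sum_of_ne_finset_zero (s := Finset.range (n + 1)) fun i hi => by
    rw [hX, if_neg (by simp at hi; omega)])]
  exact Finset.sum_congr rfl fun i hi => by rw [hX, if_pos (by simp at hi; omega)]

theorem IsAnalyticToeplitz.apply_single_zero {c : ℕ → 𝕜}
    {T : lp (fun _ : ℕ => E) p →L[𝕜] lp (fun _ : ℕ => E) p}
    (hT : IsAnalyticToeplitz c T) (e : E) (n : ℕ) : T (lp.single p 0 e) n = c n • e := by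
  rw [hT, Finset.sum_eq_single_of_mem n (by simp), Nat.sub_self, lp.single_apply_self]
  intro k hk hkn
  rw [lp.single_apply_ne _ _ _ (by simp at hk; omega), smul_zero]

theorem IsAnalyticToeplitz.eq_of_intertwine [Nontrivial E] {c₁ c₂ : ℕ → 𝕜}
    {T₁ T₂ : lp (fun _ : ℕ => E) p →L[𝕜] lp (fun _ : ℕ => E) p}
    (hT₁ : IsAnalyticToeplitz c₁ T₁) (hT₂ : IsAnalyticToeplitz c₂ T₂) (hS : IsShift S)
    (hp : p ≠ ⊤) (hXinj : Function.Injective X) (hXS : Commute X S)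
    (hXT : X ∘L T₁ = T₂ ∘L X) : c₁ = c₂ := by
  obtain ⟨e, he⟩ := exists_ne (0 : E)
  set ξ : ℕ → E := fun j => X (lp.single p 0 e) j
  have hconv : ∀ n, ∑ k ∈ Finset.range (n + 1), (c₁ k - c₂ k) • ξ (n - k) = 0 := by
    intro n
    have h := congrArg (fun f => f n) (DFunLike.congr_fun hXT (lp.single p 0 e))
    simp only [comp_apply] at h
    rw [hS.apply_eq_sum_of_commute hp hXS, hT₂] at h
    simp only [hT₁.apply_single_zero, lp.single_smul, map_smul, lp.coeFn_smul,
      Pi.smul_apply] at h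
    rw [← sub_eq_zero] at h
    simpa only [sub_smul, Finset.sum_sub_distrib] using h
  by_contra hne
  have hξ : ξ = 0 := eq_zero_of_forall_sum_range_smul_eq_zero (sub_ne_zero.mpr hne) hconv
  have hXe : X (lp.single p 0 e) = X 0 := by
    rw [map_zero]
    exact lp.ext hξ
  exact he (by simpa using congrArg (fun f : lp (fun _ : ℕ => E) p => f 0) (hXinj hXe))

end Shift

theorem Complex.eqOn_ball_of_iteratedDeriv_eq {F : Type*} [NormedAddCommGroup F]
    [NormedSpace ℂ F] [CompleteSpace F] {f g : ℂ → F} {c : ℂ} {r : ℝ}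
    (hf : DifferentiableOn ℂ f (Metric.ball c r)) (hg : DifferentiableOn ℂ g (Metric.ball c r))
    (h : ∀ n, iteratedDeriv n f c = iteratedDeriv n g c) :
    Set.EqOn f g (Metric.ball c r) := fun z hz => by
  rw [← taylorSeries_eq_on_ball hf hz, ← taylorSeries_eq_on_ball hg hz]
  simp only [h]

theorem statement10_general (E : Type*) [NormedAddCommGroup E] [InnerProductSpace ℂ E]
    [Nontrivial E]
    (θ₁ θ₂ : ℂ → ℂ)
    (hana₁ : ∀ z ∈ Metric.ball (0 : ℂ) 1, AnalyticAt ℂ θ₁ z)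
    (hana₂ : ∀ z ∈ Metric.ball (0 : ℂ) 1, AnalyticAt ℂ θ₂ z)
    (S T₁ T₂ X : lp (fun _ : ℕ => E) 2 →L[ℂ] lp (fun _ : ℕ => E) 2)
    (hS : ∀ f, (S f) 0 = 0 ∧ ∀ n : ℕ, (S f) (n + 1) = f n)
    (hT₁ : ∀ f, ∀ n : ℕ, (T₁ f) n =
      ∑ k ∈ Finset.range (n + 1), (iteratedDeriv k θ₁ 0 / (k.factorial : ℂ)) • f (n - k))
    (hT₂ : ∀ f, ∀ n : ℕ, (T₂ f) n =
      ∑ k ∈ Finset.range (n + 1), (iteratedDeriv k θ₂ 0 / (k.factorial : ℂ)) • f (n - k))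
    (hXinj : Function.Injective X)
    (hXS : X ∘L S = S ∘L X)
    (hXT : X ∘L T₁ = T₂ ∘L X) :
    ∀ z ∈ Metric.ball (0 : ℂ) 1, θ₁ z = θ₂ z := by
  have hcoeff : (fun k => iteratedDeriv k θ₁ 0 / (k.factorial : ℂ)) =
      fun k => iteratedDeriv k θ₂ 0 / (k.factorial : ℂ) :=
    IsAnalyticToeplitz.eq_of_intertwine hT₁ hT₂ hS (by simp) hXinj hXS hXT
  refine Complex.eqOn_ball_of_iteratedDeriv_eq (AnalyticOnNhd.differentiableOn hana₁)
    (AnalyticOnNhd.differentiableOn hana₂) fun k => ?_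
  exact (div_left_inj' (Nat.cast_ne_zero.mpr k.factorial_ne_zero)).mp (congrFun hcoeff k)

/-- Let `θ₁, θ₂` be nonconstant inner functions (analytic on the disk,
bounded by 1, with radial limits of modulus 1 a.e. on the circle), `E ≠ {0}` a Hilbert
space. Model `H²(E)` as `ℓ²(ℕ, E)` via Taylor coefficients; the shift `S_E` and the
analytic Toeplitz operators `T_{θᵢ·I_E}` (given by convolution with the Taylor
coefficients `θᵢ⁽ᵏ⁾(0)/k!`) act there. If `X` is an injective bounded operator with
dense range commuting with `S_E` and satisfying `X T_{θ₁·I_E} = T_{θ₂·I_E} X`, then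
`θ₁ = θ₂` on the disk. -/
theorem statement10 (E : Type*) [NormedAddCommGroup E] [InnerProductSpace ℂ E]
    [CompleteSpace E] [Nontrivial E]
    (θ₁ θ₂ : ℂ → ℂ)
    (hana₁ : ∀ z ∈ Metric.ball (0 : ℂ) 1, AnalyticAt ℂ θ₁ z)
    (hana₂ : ∀ z ∈ Metric.ball (0 : ℂ) 1, AnalyticAt ℂ θ₂ z)
    (hb₁ : ∀ z ∈ Metric.ball (0 : ℂ) 1, ‖θ₁ z‖ ≤ 1)
    (hb₂ : ∀ z ∈ Metric.ball (0 : ℂ) 1, ‖θ₂ z‖ ≤ 1)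
    (hinner₁ : ∀ᵐ (t : ℝ) ∂(MeasureTheory.volume.restrict (Set.Ioc (0 : ℝ) (2 * Real.pi))),
      ∃ l : ℂ, ‖l‖ = 1 ∧ Filter.Tendsto
        (fun r : ℝ => θ₁ ((r : ℂ) * Complex.exp (Complex.I * (t : ℂ))))
        (nhdsWithin 1 (Set.Iio 1)) (nhds l))
    (hinner₂ : ∀ᵐ (t : ℝ) ∂(MeasureTheory.volume.restrict (Set.Ioc (0 : ℝ) (2 * Real.pi))),
      ∃ l : ℂ, ‖l‖ = 1 ∧ Filter.Tendsto
        (fun r : ℝ => θ₂ ((r : ℂ) * Complex.exp (Complex.I * (t : ℂ))))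
        (nhdsWithin 1 (Set.Iio 1)) (nhds l))
    (hnc₁ : ∃ z ∈ Metric.ball (0 : ℂ) 1, ∃ w ∈ Metric.ball (0 : ℂ) 1, θ₁ z ≠ θ₁ w)
    (hnc₂ : ∃ z ∈ Metric.ball (0 : ℂ) 1, ∃ w ∈ Metric.ball (0 : ℂ) 1, θ₂ z ≠ θ₂ w)
    (S T₁ T₂ X : lp (fun _ : ℕ => E) 2 →L[ℂ] lp (fun _ : ℕ => E) 2)
    (hS : ∀ f, (S f) 0 = 0 ∧ ∀ n : ℕ, (S f) (n + 1) = f n)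
    (hT₁ : ∀ f, ∀ n : ℕ, (T₁ f) n =
      ∑ k ∈ Finset.range (n + 1), (iteratedDeriv k θ₁ 0 / (k.factorial : ℂ)) • f (n - k))
    (hT₂ : ∀ f, ∀ n : ℕ, (T₂ f) n =
      ∑ k ∈ Finset.range (n + 1), (iteratedDeriv k θ₂ 0 / (k.factorial : ℂ)) • f (n - k))
    (hXinj : Function.Injective X)
    (hXdense : Dense (Set.range X))
    (hXS : X ∘L S = S ∘L X)
    (hXT : X ∘L T₁ = T₂ ∘L X) :
    ∀ z ∈ Metric.ball (0 : ℂ) 1, θ₁ z = θ₂ z :=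
  statement10_general E θ₁ θ₂ hana₁ hana₂ S T₁ T₂ X hS hT₁ hT₂ hXinj hXS hXT
end

section
/- For a subset A of the integers ℤ, let U be the bilateral shift on L²(𝕋) (Ue_n = e_{n+1} in the standard basis e_n(ζ) = ζⁿ) and Q_A the orthogonal projection onto the closed span of {e_j : j ∈ A}. If there is a unitary operator Φ on L²(𝕋) with ΦU = UΦ and ΦQ_A = Q_BΦ, then B = A + n for some integer n. Conversely, if B = A + n then Uⁿ implements such an equivalence. -/
/-!
A unitary `Φ` commuting with the bilateral shift `U` has a Laurent matrix: the coefficient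
`(Φ e_j)(m)` depends only on `m - j`. Since `Φ` is injective, `(Φ e_0)(k) ≠ 0` for some `k`, and
then comparing the `(j + k)`-th coefficients of `Φ Q_A e_j = Q_B Φ e_j` gives
`j ∈ A ↔ j + k ∈ B`. Conversely, translation by `n` is a unitary commuting with `U` which carries
`Q_A` to `Q_{A + n}`.
-/

open ContinuousLinearMap

namespace lp

section Shift

variable {G 𝕜 E : Type*} [AddGroup G] [RCLike 𝕜] [NormedAddCommGroup E] [NormedSpace 𝕜 E]

lemma memℓp_two_comp_sub (f : lp (fun _ : G => E) 2) (n : G) :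
    Memℓp (fun m => f (m - n)) 2 :=
  memℓp_gen <| (Equiv.subRight n).summable_iff.mpr <|
    (memℓp_gen_iff (by norm_num)).mp (lp.memℓp f)

variable (𝕜) in
def shift (n : G) : lp (fun _ : G => E) 2 ≃ₗᵢ[𝕜] lp (fun _ : G => E) 2 where
  toFun f := ⟨fun m => f (m - n), memℓp_two_comp_sub f n⟩
  invFun f := ⟨fun m => f (m - -n), memℓp_two_comp_sub f (-n)⟩
  map_add' _ _ := rfl
  map_smul' _ _ := rfl
  left_inv f := by ext m; simp
  right_inv f := by ext m; simp
  norm_map' f := by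
    have h2 : 0 < (2 : ENNReal).toReal := by norm_num
    simp only [LinearEquiv.coe_mk, norm_eq_tsum_rpow h2]
    congr 1
    exact (Equiv.subRight n).tsum_eq fun m => ‖f m‖ ^ (2 : ENNReal).toReal

@[simp]
lemma shift_apply (n : G) (f : lp (fun _ : G => E) 2) (m : G) : shift 𝕜 n f m = f (m - n) := rfl

lemma shift_comp_indicator {QA QB : lp (fun _ : G => E) 2 →L[𝕜] lp (fun _ : G => E) 2}
    {A B : Set G} (hQA : ∀ f m, QA f m = A.indicator (fun m => f m) m)
    (hQB : ∀ f m, QB f m = B.indicator (fun m => f m) m) {n : G} (hB : B = (· + n) '' A) :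
    (shift (E := E) 𝕜 n : lp (fun _ : G => E) 2 →L[𝕜] lp (fun _ : G => E) 2) ∘L QA =
      QB ∘L (shift (E := E) 𝕜 n : lp (fun _ : G => E) 2 →L[𝕜] lp (fun _ : G => E) 2) := by
  classical
  have hmem : ∀ m, m - n ∈ A ↔ m ∈ B := by
    simp [hB, Set.image_add_right, sub_eq_add_neg]
  ext f m
  simp only [comp_apply, LinearIsometryEquiv.coe_coe'', shift_apply, hQA, hQB,
    Set.indicator_apply, hmem]

end Shift

lemma shift_comp_comm {G 𝕜 E : Type*} [AddCommGroup G] [RCLike 𝕜] [NormedAddCommGroup E]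
    [NormedSpace 𝕜 E] {U : lp (fun _ : G => E) 2 →L[𝕜] lp (fun _ : G => E) 2} {a : G}
    (hU : ∀ f m, U f m = f (m - a)) (n : G) :
    (shift (E := E) 𝕜 n : lp (fun _ : G => E) 2 →L[𝕜] lp (fun _ : G => E) 2) ∘L U =
      U ∘L (shift (E := E) 𝕜 n : lp (fun _ : G => E) 2 →L[𝕜] lp (fun _ : G => E) 2) := by
  ext f m
  simp [hU, sub_right_comm]

section Single

variable {ι 𝕜 E : Type*} [DecidableEq ι] [RCLike 𝕜] [NormedAddCommGroup E] [NormedSpace 𝕜 E]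
  {p : ENNReal} [Fact (1 ≤ p)]

lemma apply_single_of_indicator {Q : lp (fun _ : ι => E) p →L[𝕜] lp (fun _ : ι => E) p}
    {A : Set ι} (hQ : ∀ f m, Q f m = A.indicator (fun m => f m) m) (j : ι) (c : E)
    [Decidable (j ∈ A)] :
    Q (lp.single p j c) = if j ∈ A then lp.single p j c else 0 := by
  ext m
  rw [hQ]
  by_cases hmj : m = j
  · subst hmj
    split_ifs with h <;> simp [h]
  · split_ifs <;> simp [Pi.single_eq_of_ne hmj]

lemma mem_iff_mem_of_comp_indicator
    {Φ QA QB : lp (fun _ : ι => E) p →L[𝕜] lp (fun _ : ι => E) p} {A B : Set ι}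
    (hQA : ∀ f m, QA f m = A.indicator (fun m => f m) m)
    (hQB : ∀ f m, QB f m = B.indicator (fun m => f m) m) (hΦ : Φ ∘L QA = QB ∘L Φ)
    {j m : ι} {c : E} (h : Φ (lp.single p j c) m ≠ 0) : j ∈ A ↔ m ∈ B := by
  classical
  have hm := congr($hΦ (lp.single p j c) m)
  simp only [comp_apply, apply_single_of_indicator hQA, hQB, Set.indicator_apply] at hm
  split_ifs at hm <;> simp_all

end Single

lemma apply_single_of_apply_sub {G 𝕜 E : Type*} [AddGroup G] [DecidableEq G] [RCLike 𝕜]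
    [NormedAddCommGroup E] [NormedSpace 𝕜 E] {p : ENNReal} [Fact (1 ≤ p)]
    {U : lp (fun _ : G => E) p →L[𝕜] lp (fun _ : G => E) p} {a : G}
    (hU : ∀ f m, U f m = f (m - a)) (n : G) (c : E) :
    U (lp.single p n c) = lp.single p (n + a) c := by
  ext m
  simp [hU, lp.single_apply, Pi.single_apply, sub_eq_iff_eq_add]

lemma apply_single_eq_apply_single_zero {𝕜 E : Type*} [RCLike 𝕜] [NormedAddCommGroup E]
    [NormedSpace 𝕜 E] {p : ENNReal} [Fact (1 ≤ p)]
    {Φ U : lp (fun _ : ℤ => E) p →L[𝕜] lp (fun _ : ℤ => E) p}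
    (hU : ∀ f m, U f m = f (m - 1)) (hΦ : Φ ∘L U = U ∘L Φ) (c : E) (n m : ℤ) :
    Φ (lp.single p n c) m = Φ (lp.single p 0 c) (m - n) := by
  have hstep : ∀ n m, Φ (lp.single p (n + 1) c) m = Φ (lp.single p n c) (m - 1) := by
    intro n m
    rw [← apply_single_of_apply_sub hU, ← comp_apply, hΦ, comp_apply, hU]
  induction n using Int.induction_on generalizing m with
  | zero => simp
  | succ k ih => rw [hstep, ih, sub_sub, add_comm 1]
  | pred k ih =>
    have h := hstep (-k - 1) (m + 1)
    rw [sub_add_cancel, add_sub_cancel_right] at h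
    rw [← h, ih, show m + 1 - -(k : ℤ) = m - (-k - 1) by ring]

end lp

lemma Set.eq_image_add_of_forall_mem_iff {G : Type*} [AddGroup G] {A B : Set G} {k : G}
    (h : ∀ a, a ∈ A ↔ a + k ∈ B) : B = (· + k) '' A := by
  ext b
  simp [Set.image_add_right, h]

/-- Model `L²(𝕋)` as `ℓ²(ℤ)` via the Fourier basis `e_n`. Let `U` be the
bilateral shift (`Ue_n = e_{n+1}`, i.e. `(Uf)(n) = f(n-1)` in coefficients) and, for
`A ⊆ ℤ`, let `Q_A` be the orthogonal projection onto `span{e_j : j ∈ A}`. There exists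
a unitary `Φ` with `ΦU = UΦ` and `ΦQ_A = Q_BΦ` if and only if `B = A + n` for some
integer `n` (the converse being implemented by `Uⁿ`). -/
theorem statement12 (A B : Set ℤ)
    (U QA QB : lp (fun _ : ℤ => ℂ) 2 →L[ℂ] lp (fun _ : ℤ => ℂ) 2)
    (hU : ∀ f, ∀ n : ℤ, (U f) n = f (n - 1))
    (hQA : ∀ f, ∀ n : ℤ, (QA f) n = Set.indicator A (fun m => f m) n)
    (hQB : ∀ f, ∀ n : ℤ, (QB f) n = Set.indicator B (fun m => f m) n) :
    (∃ Φ : lp (fun _ : ℤ => ℂ) 2 →L[ℂ] lp (fun _ : ℤ => ℂ) 2,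
        adjoint Φ ∘L Φ = 1 ∧ Φ ∘L adjoint Φ = 1 ∧
        Φ ∘L U = U ∘L Φ ∧ Φ ∘L QA = QB ∘L Φ) ↔
      ∃ n : ℤ, B = (fun a => a + n) '' A := by
  constructor
  · rintro ⟨Φ, hΦΦ, -, hΦU, hΦQ⟩
    have hinj : Function.Injective Φ :=
      Function.LeftInverse.injective (g := adjoint Φ) fun f => congr($hΦΦ f)
    have hne : Φ (lp.single 2 0 (1 : ℂ)) ≠ 0 :=
      (map_ne_zero_iff Φ hinj).mpr <| norm_ne_zero_iff.mp <| by simp [lp.norm_single]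
    obtain ⟨k, hk⟩ : ∃ k, Φ (lp.single 2 0 (1 : ℂ)) k ≠ 0 := by
      by_contra! h
      exact hne (lp.ext (funext h))
    refine ⟨k, Set.eq_image_add_of_forall_mem_iff fun j => ?_⟩
    refine lp.mem_iff_mem_of_comp_indicator hQA hQB hΦQ (c := (1 : ℂ)) ?_
    rwa [lp.apply_single_eq_apply_single_zero hU hΦU, add_sub_cancel_left]
  · rintro ⟨n, hB⟩
    refine ⟨_, ?_, ?_, lp.shift_comp_comm hU n, lp.shift_comp_indicator hQA hQB hB⟩ <;>
      simp [one_def]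
end

section
/- With U the bilateral shift on L²(𝕋) and Q_A the projection onto span{e_j : j ∈ A} for A ⊆ ℤ: the pair (U, Q_A) is reducible (i.e., there exists a nontrivial closed subspace reducing both U and Q_A, equivalently a non-scalar unitary commuting with both) if and only if A is periodic, i.e., A = A + n for some nonzero integer n. -/
/-!
An operator `Φ` commuting with the shift acts as a convolution: `Φ e_k` is the translate by `k`
of `a := Φ e_0`. If `Φ` also commutes with `Q_A`, then `a (m - k) ≠ 0` forces `m ∈ A ↔ k ∈ A`, so
every `k ≠ 0` in the support of `a` is a period of `A`, while `a` supported at `0` makes `Φ` the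
scalar `a 0`. Conversely, translation by a period of `A` is a non-scalar unitary commuting with
both operators.
-/

open ContinuousLinearMap
open scoped lp

namespace lp

variable {ι κ 𝕜 : Type*} [RCLike 𝕜]

theorem memℓp_comp_equiv (σ : ι ≃ κ) (f : ℓ²(κ, 𝕜)) : Memℓp (f ∘ σ) 2 := by
  refine memℓp_gen ?_
  exact (σ.summable_iff (f := fun k => ‖f k‖ ^ (2 : ENNReal).toReal)).2
    ((memℓp_gen_iff (by norm_num)).1 f.2)

noncomputable def compEquiv (σ : ι ≃ κ) : ℓ²(κ, 𝕜) ≃ₗᵢ[𝕜] ℓ²(ι, 𝕜) where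
  toFun f := ⟨f ∘ σ, memℓp_comp_equiv σ f⟩
  invFun f := ⟨f ∘ σ.symm, memℓp_comp_equiv σ.symm f⟩
  map_add' _ _ := rfl
  map_smul' _ _ := rfl
  left_inv f := by ext; simp
  right_inv f := by ext; simp
  norm_map' f := by
    simp only [LinearEquiv.coe_mk]
    rw [norm_eq_tsum_rpow (by norm_num), norm_eq_tsum_rpow (by norm_num)]
    exact congrArg (· ^ _) (σ.tsum_eq fun k => ‖f k‖ ^ (2 : ENNReal).toReal)

@[simp]
theorem compEquiv_apply (σ : ι ≃ κ) (f : ℓ²(κ, 𝕜)) (i : ι) : compEquiv σ f i = f (σ i) := rfl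

theorem compEquiv_ne_smul_one {σ : Equiv.Perm ι} {i : ι} (hi : σ i ≠ i) (c : 𝕜) :
    (compEquiv (𝕜 := 𝕜) σ : ℓ²(ι, 𝕜) →L[𝕜] ℓ²(ι, 𝕜)) ≠ c • 1 := by
  classical
  intro h
  have := congrArg (· i) (DFunLike.congr_fun h (lp.single 2 (σ i) 1))
  simp [hi] at this

variable [DecidableEq ι]

theorem ext_single_one {F : Type*} [AddCommMonoid F] [Module 𝕜 F] [TopologicalSpace F]
    [T2Space F] {T S : ℓ²(ι, 𝕜) →L[𝕜] F}
    (h : ∀ i, T (lp.single 2 i 1) = S (lp.single 2 i 1)) : T = S :=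
  ext_continuousLinearMap (by norm_num) fun i => ext_ring (h i)

theorem mem_iff_mem_of_commute_indicator {A : Set ι} {Q Φ : ℓ²(ι, 𝕜) →L[𝕜] ℓ²(ι, 𝕜)}
    (hQ : ∀ f i, Q f i = A.indicator f i) (hΦQ : Φ ∘L Q = Q ∘L Φ) {i j : ι}
    (hij : Φ (lp.single 2 j 1) i ≠ 0) : i ∈ A ↔ j ∈ A := by
  have hQj : Q (lp.single 2 j 1) = A.indicator (1 : ι → 𝕜) j • lp.single 2 j 1 := by
    ext k
    by_cases hk : k = j
    · subst hk; by_cases hkA : k ∈ A <;> simp [hQ, hkA]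
    · simp [hQ, hk]
  have h := congrArg (· i) (DFunLike.congr_fun hΦQ (lp.single 2 j 1))
  simp only [comp_apply, hQj, map_smul, coeFn_smul, Pi.smul_apply, hQ] at h
  by_cases hi : i ∈ A <;> by_cases hj : j ∈ A <;> simp_all

end lp

section BilateralShift

variable {𝕜 : Type*} [RCLike 𝕜] {U Φ : ℓ²(ℤ, 𝕜) →L[𝕜] ℓ²(ℤ, 𝕜)}

theorem shift_single (hU : ∀ f n, U f n = f (n - 1)) (k : ℤ) (c : 𝕜) :
    U (lp.single 2 k c) = lp.single 2 (k + 1) c := by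
  ext n
  simp [hU, Pi.single_apply, sub_eq_iff_eq_add]

theorem apply_single_eq_of_commute_shift (hU : ∀ f n, U f n = f (n - 1))
    (hΦU : Φ ∘L U = U ∘L Φ) (k n : ℤ) :
    Φ (lp.single 2 k 1) n = Φ (lp.single 2 0 1) (n - k) := by
  have step : ∀ k n, Φ (lp.single 2 (k + 1) 1) (n + 1) = Φ (lp.single 2 k 1) n := by
    intro k n
    rw [← shift_single hU, ← comp_apply, hΦU, comp_apply, hU, add_sub_cancel_right]
  induction k using Int.induction_on generalizing n with
  | zero => rw [sub_zero]
  | succ k ih => rw [← sub_add_cancel n 1, step, ih]; exact congrArg _ (by ring)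
  | pred k ih => rw [← step, sub_add_cancel, ih]; exact congrArg _ (by ring)

theorem eq_smul_one_of_commute_shift (hU : ∀ f n, U f n = f (n - 1))
    (hΦU : Φ ∘L U = U ∘L Φ) (h : ∀ k ≠ 0, Φ (lp.single 2 0 1) k = 0) :
    Φ = Φ (lp.single 2 0 1) 0 • 1 := by
  refine lp.ext_single_one fun k => ?_
  ext n
  rw [apply_single_eq_of_commute_shift hU hΦU]
  by_cases hn : n = k
  · simp [hn]
  · simp [hn, h (n - k) (sub_ne_zero.2 hn)]

end BilateralShift

/-- With `U` the bilateral shift on `L²(𝕋) ≅ ℓ²(ℤ)` and `Q_A` the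
projection onto `span{e_j : j ∈ A}`: the pair `(U, Q_A)` is reducible — i.e. there is
a non-scalar unitary commuting with both — if and only if `A` is periodic:
`A = A + n` for some nonzero integer `n`. -/
theorem statement13 (A : Set ℤ)
    (U QA : lp (fun _ : ℤ => ℂ) 2 →L[ℂ] lp (fun _ : ℤ => ℂ) 2)
    (hU : ∀ f, ∀ n : ℤ, (U f) n = f (n - 1))
    (hQA : ∀ f, ∀ n : ℤ, (QA f) n = Set.indicator A (fun m => f m) n) :
    (∃ Φ : lp (fun _ : ℤ => ℂ) 2 →L[ℂ] lp (fun _ : ℤ => ℂ) 2,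
        adjoint Φ ∘L Φ = 1 ∧ Φ ∘L adjoint Φ = 1 ∧
        Φ ∘L U = U ∘L Φ ∧ Φ ∘L QA = QA ∘L Φ ∧
        ∀ c : ℂ, Φ ≠ c • (1 : lp (fun _ : ℤ => ℂ) 2 →L[ℂ] lp (fun _ : ℤ => ℂ) 2)) ↔
      ∃ n : ℤ, n ≠ 0 ∧ A = (fun a => a + n) '' A := by
  have periodic_iff (n : ℤ) : A = (fun a => a + n) '' A ↔ ∀ m, m ∈ A ↔ m - n ∈ A := by
    rw [Set.image_add_right, Set.ext_iff]
    simp [sub_eq_add_neg]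
  constructor
  · rintro ⟨Φ, -, -, hΦU, hΦQ, hΦ⟩
    obtain ⟨k, hk, hΦk⟩ : ∃ k ≠ 0, Φ (lp.single 2 0 1) k ≠ 0 := by
      by_contra! h
      exact hΦ _ (eq_smul_one_of_commute_shift hU hΦU h)
    refine ⟨k, hk, (periodic_iff k).2 fun m => lp.mem_iff_mem_of_commute_indicator hQA hΦQ ?_⟩
    rwa [apply_single_eq_of_commute_shift hU hΦU, sub_sub_cancel]
  · rintro ⟨n, hn, hA⟩
    let T := lp.compEquiv (𝕜 := ℂ) (Equiv.subRight n)
    refine ⟨T, (norm_map_iff_adjoint_comp_self _).1 T.norm_map, ?_, ?_, ?_,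
      lp.compEquiv_ne_smul_one (i := 0) (by simpa using hn)⟩
    · rw [T.adjoint_eq_symm]; ext; simp
    · ext f m; simp [T, hU, sub_right_comm]
    · ext f m
      have hm := (periodic_iff n).1 hA m
      by_cases hmA : m ∈ A <;> simp [T, hQA, hmA, ← hm]
end

section
/- Let Γ be a nonempty proper subset of ℤ² with Γ + ℕ² ⊆ Γ. Define ∂Γ = {(i,j) ∈ Γ : (i−1, j−1) ∉ Γ}. Then for every integer n there exists a unique point (i, j) ∈ ∂Γ with i − j = n. -/
/-!
The condition `Γ + ℕ² ⊆ Γ` says that `Γ` is an upper set of `ℤ × ℤ` for the product order.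
Its trace on the anti-diagonal line `i - j = n`, parametrized by `t ↦ (t, t - n)`, is then an
upper set of `ℤ`; it is nonempty and proper because the line meets every up-set and every
down-set of a point. A nonempty proper upper set of `ℤ` is a ray `[m, ∞)`, and `m` is the only
`t` in it with `t - 1` outside it.
-/

open Set

theorem IsUpperSet.existsUnique_mem_and_sub_one_notMem {S : Set ℤ} (hS : IsUpperSet S)
    (hne : S.Nonempty) (hS' : S ≠ univ) : ∃! t, t ∈ S ∧ t - 1 ∉ S := by
  obtain ⟨u, hu⟩ := (ne_univ_iff_exists_notMem S).mp hS'
  have hbdd : ∀ t ∈ S, u ≤ t := fun t ht => le_of_lt (lt_of_not_ge fun h => hu (hS h ht))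
  obtain ⟨m, hm, hleast⟩ := Int.exists_least_of_bdd ⟨u, hbdd⟩ hne
  refine ⟨m, ⟨hm, fun h => by linarith [hleast _ h]⟩, ?_⟩
  rintro t ⟨ht, ht'⟩
  have hmt : m ≤ t := hleast t ht
  by_contra hmt'
  exact ht' (hS (show m ≤ t - 1 by omega) hm)

abbrev antidiag (n t : ℤ) : ℤ × ℤ := (t, t - n)

theorem monotone_antidiag (n : ℤ) : Monotone (antidiag n) :=
  fun _ _ h => ⟨h, by simpa using h⟩

theorem exists_le_antidiag (n : ℤ) (p : ℤ × ℤ) : ∃ t, p ≤ antidiag n t :=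
  ⟨max p.1 (p.2 + n), le_max_left _ _, le_sub_iff_add_le.mpr (le_max_right _ _)⟩

theorem exists_antidiag_le (n : ℤ) (p : ℤ × ℤ) : ∃ t, antidiag n t ≤ p :=
  ⟨min p.1 (p.2 + n), min_le_left _ _, by simp⟩

theorem isUpperSet_of_add_mem {Γ : Set (ℤ × ℤ)}
    (hup : ∀ p ∈ Γ, ∀ a b : ℤ, 0 ≤ a → 0 ≤ b → (p.1 + a, p.2 + b) ∈ Γ) : IsUpperSet Γ := by
  rintro p q ⟨h₁, h₂⟩ hp
  simpa using hup p hp (q.1 - p.1) (q.2 - p.2) (by omega) (by omega)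

theorem IsUpperSet.existsUnique_antidiag {Γ : Set (ℤ × ℤ)} (hΓ : IsUpperSet Γ)
    (hne : Γ.Nonempty) (hproper : Γ ≠ univ) (n : ℤ) :
    ∃! t, antidiag n t ∈ Γ ∧ antidiag n (t - 1) ∉ Γ := by
  apply (hΓ.preimage (monotone_antidiag n)).existsUnique_mem_and_sub_one_notMem
  · obtain ⟨p, hp⟩ := hne
    obtain ⟨t, ht⟩ := exists_le_antidiag n p
    exact ⟨t, hΓ ht hp⟩
  · obtain ⟨p, hp⟩ := (ne_univ_iff_exists_notMem Γ).mp hproper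
    obtain ⟨t, ht⟩ := exists_antidiag_le n p
    exact (ne_univ_iff_exists_notMem _).mpr ⟨t, fun h => hp (hΓ ht h)⟩

/-- Let `Γ` be a nonempty proper subset of `ℤ²` with `Γ + ℕ² ⊆ Γ`, and
let `∂Γ = {(i,j) ∈ Γ : (i-1, j-1) ∉ Γ}`. Then for every integer `n` there is a unique
point `(i,j) ∈ ∂Γ` with `i - j = n`. -/
theorem statement15 (Γ : Set (ℤ × ℤ)) (hne : Γ.Nonempty) (hproper : Γ ≠ Set.univ)
    (hup : ∀ p ∈ Γ, ∀ a b : ℤ, 0 ≤ a → 0 ≤ b → (p.1 + a, p.2 + b) ∈ Γ) :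
    ∀ n : ℤ, ∃! p : ℤ × ℤ,
      p ∈ Γ ∧ (p.1 - 1, p.2 - 1) ∉ Γ ∧ p.1 - p.2 = n := by
  intro n
  have hshift (t : ℤ) : antidiag n (t - 1) = (t - 1, t - n - 1) := by ext <;> simp; ring
  obtain ⟨t, ⟨ht, ht'⟩, huniq⟩ := (isUpperSet_of_add_mem hup).existsUnique_antidiag hne hproper n
  refine ⟨antidiag n t, ⟨ht, by simpa [hshift] using ht', by simp⟩, ?_⟩
  rintro ⟨i, j⟩ ⟨hij, hij', rfl⟩
  have hj : antidiag (i - j) i = (i, j) := by simp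
  obtain rfl := huniq i ⟨by rwa [hj], by rwa [hshift, sub_sub_cancel]⟩
  exact hj.symm
end

section
/- Let W₀, W₁ be commuting isometries on a Hilbert space H. Define D = ker(W₀W₁)*, E = ker W₀*, F = ker W₁*. Then D = E ⊕ W₀F and D = W₁E ⊕ F as orthogonal direct sums, and the map U : D → D defined by U(W₁e + f) = e + W₀f for e ∈ E, f ∈ F is a well-defined unitary operator on D. -/
open ContinuousLinearMap

/-!
`D = ker (W₀W₁)*` splits as `E ⊕ W₀F`: for `x ∈ D` write `x = (x - W₀W₀*x) + W₀(W₀*x)`, using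
`W₀*W₀ = 1`; by commutativity it splits as `W₁E ⊕ F` in the same way. Both splittings are
orthogonal, so `‖W₁e + f‖² = ‖e‖² + ‖f‖² = ‖e + W₀f‖²`, and `U` exchanging them is unitary on `D`.
It extends to all of `H` as `W₁* + W₀(1 - W₁W₁*)`, since `1 - W₁W₁*` is the projection onto `F`.
-/

section

variable {𝕜 H : Type*} [RCLike 𝕜] [NormedAddCommGroup H] [InnerProductSpace 𝕜 H] [CompleteSpace H]

local notation "⟪" x ", " y "⟫" => inner 𝕜 x y

lemma adjoint_apply_apply_of_norm_map {V : H →L[𝕜] H} (hV : ∀ x, ‖V x‖ = ‖x‖) (x : H) :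
    adjoint V (V x) = x := by
  rw [← comp_apply, (norm_map_iff_adjoint_comp_self V).mp hV, one_apply_eq_self]

lemma inner_apply_eq_zero_of_mem_ker_adjoint {V : H →L[𝕜] H} {e : H}
    (he : e ∈ LinearMap.ker (adjoint V : H →ₗ[𝕜] H)) (x : H) : ⟪e, V x⟫ = 0 := by
  rw [← adjoint_inner_left, show adjoint V e = 0 from he, inner_zero_left]

lemma inner_apply_eq_zero_of_mem_ker_adjoint' {V : H →L[𝕜] H} {f : H}
    (hf : f ∈ LinearMap.ker (adjoint V : H →ₗ[𝕜] H)) (x : H) : ⟪V x, f⟫ = 0 := by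
  rw [← adjoint_inner_right, show adjoint V f = 0 from hf, inner_zero_right]

lemma mem_ker_adjoint_comp_iff {A B : H →L[𝕜] H} (hA : ∀ x, ‖A x‖ = ‖x‖) (x : H) :
    x ∈ LinearMap.ker (adjoint (A ∘L B) : H →ₗ[𝕜] H) ↔
      ∃ e ∈ LinearMap.ker (adjoint A : H →ₗ[𝕜] H), ∃ f ∈ LinearMap.ker (adjoint B : H →ₗ[𝕜] H),
        x = e + A f := by
  have hAB : ∀ y, adjoint (A ∘L B) y = adjoint B (adjoint A y) := fun y => by
    rw [adjoint_comp, comp_apply]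
  simp only [LinearMap.mem_ker, coe_coe, hAB]
  constructor
  · intro hx
    refine ⟨x - A (adjoint A x), ?_, adjoint A x, hx, by abel⟩
    rw [map_sub, adjoint_apply_apply_of_norm_map hA, sub_self]
  · rintro ⟨e, he, f, hf, rfl⟩
    rw [map_add, adjoint_apply_apply_of_norm_map hA, he, zero_add, hf]

lemma mem_ker_adjoint_comp_iff_of_comm {A B : H →L[𝕜] H} (hB : ∀ x, ‖B x‖ = ‖x‖)
    (hAB : A ∘L B = B ∘L A) (x : H) :
    x ∈ LinearMap.ker (adjoint (A ∘L B) : H →ₗ[𝕜] H) ↔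
      ∃ e ∈ LinearMap.ker (adjoint A : H →ₗ[𝕜] H), ∃ f ∈ LinearMap.ker (adjoint B : H →ₗ[𝕜] H),
        x = B e + f := by
  rw [hAB, mem_ker_adjoint_comp_iff hB]
  constructor <;> rintro ⟨e, he, f, hf, rfl⟩ <;> exact ⟨f, hf, e, he, add_comm _ _⟩

lemma norm_apply_add_eq_norm_add_apply {A B : H →L[𝕜] H}
    (hA : ∀ x, ‖A x‖ = ‖x‖) (hB : ∀ x, ‖B x‖ = ‖x‖) {e f : H}
    (he : e ∈ LinearMap.ker (adjoint A : H →ₗ[𝕜] H)) (hf : f ∈ LinearMap.ker (adjoint B : H →ₗ[𝕜] H)) :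
    ‖B e + f‖ = ‖e + A f‖ := by
  rw [← mul_self_inj (norm_nonneg _) (norm_nonneg _),
    norm_add_sq_eq_norm_sq_add_norm_sq_of_inner_eq_zero _ _
      (inner_apply_eq_zero_of_mem_ker_adjoint' hf e),
    norm_add_sq_eq_norm_sq_add_norm_sq_of_inner_eq_zero _ _
      (inner_apply_eq_zero_of_mem_ker_adjoint he f), hA, hB]

lemma adjoint_add_comp_one_sub_apply {A B : H →L[𝕜] H} (hB : ∀ x, ‖B x‖ = ‖x‖) (e : H) {f : H}
    (hf : f ∈ LinearMap.ker (adjoint B : H →ₗ[𝕜] H)) :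
    (adjoint B + A ∘L (1 - B ∘L adjoint B) : H →L[𝕜] H) (B e + f) = e + A f := by
  simp [adjoint_apply_apply_of_norm_map hB, show adjoint B f = 0 from hf]

end

/-- Let `W₀, W₁` be commuting isometries on a Hilbert space `H`, and set
`D = ker(W₀W₁)*`, `E = ker W₀*`, `F = ker W₁*`. Then `D = E ⊕ W₀F` and `D = W₁E ⊕ F`
as orthogonal direct sums, and `U(W₁e + f) = e + W₀f` (for `e ∈ E`, `f ∈ F`) defines a
unitary operator on `D` (here realized as a bounded operator on `H` acting by this
formula, mapping `D` isometrically onto `D`). -/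
theorem statement19 (H : Type*) [NormedAddCommGroup H] [InnerProductSpace ℂ H]
    [CompleteSpace H] (W₀ W₁ : H →L[ℂ] H)
    (h0 : ∀ x, ‖W₀ x‖ = ‖x‖) (h1 : ∀ x, ‖W₁ x‖ = ‖x‖)
    (hcomm : W₀ ∘L W₁ = W₁ ∘L W₀) :
    (∀ e ∈ LinearMap.ker (adjoint W₀ : H →ₗ[ℂ] H), ∀ f ∈ LinearMap.ker (adjoint W₁ : H →ₗ[ℂ] H),
      (inner ℂ e (W₀ f) : ℂ) = 0) ∧
    (∀ e ∈ LinearMap.ker (adjoint W₀ : H →ₗ[ℂ] H), ∀ f ∈ LinearMap.ker (adjoint W₁ : H →ₗ[ℂ] H),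
      (inner ℂ (W₁ e) f : ℂ) = 0) ∧
    ((LinearMap.ker (adjoint (W₀ ∘L W₁) : H →ₗ[ℂ] H) : Set H) =
      {x | ∃ e ∈ LinearMap.ker (adjoint W₀ : H →ₗ[ℂ] H), ∃ f ∈ LinearMap.ker (adjoint W₁ : H →ₗ[ℂ] H),
        x = e + W₀ f}) ∧
    ((LinearMap.ker (adjoint (W₀ ∘L W₁) : H →ₗ[ℂ] H) : Set H) =
      {x | ∃ e ∈ LinearMap.ker (adjoint W₀ : H →ₗ[ℂ] H), ∃ f ∈ LinearMap.ker (adjoint W₁ : H →ₗ[ℂ] H),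
        x = W₁ e + f}) ∧
    (∃ U : H →L[ℂ] H,
      (∀ e ∈ LinearMap.ker (adjoint W₀ : H →ₗ[ℂ] H), ∀ f ∈ LinearMap.ker (adjoint W₁ : H →ₗ[ℂ] H),
        U (W₁ e + f) = e + W₀ f) ∧
      (∀ x ∈ LinearMap.ker (adjoint (W₀ ∘L W₁) : H →ₗ[ℂ] H), ‖U x‖ = ‖x‖) ∧
      U '' (LinearMap.ker (adjoint (W₀ ∘L W₁) : H →ₗ[ℂ] H) : Set H) =
        (LinearMap.ker (adjoint (W₀ ∘L W₁) : H →ₗ[ℂ] H) : Set H)) := by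
  have hD₀ := mem_ker_adjoint_comp_iff (B := W₁) h0
  have hD₁ := mem_ker_adjoint_comp_iff_of_comm h1 hcomm
  have hU : ∀ e ∈ LinearMap.ker (adjoint W₀ : H →ₗ[ℂ] H),
      ∀ f ∈ LinearMap.ker (adjoint W₁ : H →ₗ[ℂ] H),
      (adjoint W₁ + W₀ ∘L (1 - W₁ ∘L adjoint W₁) : H →L[ℂ] H) (W₁ e + f) = e + W₀ f :=
    fun e _ _ hf => adjoint_add_comp_one_sub_apply h1 e hf
  refine ⟨fun e he f _ => inner_apply_eq_zero_of_mem_ker_adjoint he f,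
    fun e _ f hf => inner_apply_eq_zero_of_mem_ker_adjoint' hf e, Set.ext hD₀, Set.ext hD₁, _, hU,
    fun x hx => ?_, Set.Subset.antisymm ?_ fun y hy => ?_⟩
  · obtain ⟨e, he, f, hf, rfl⟩ := (hD₁ x).mp hx
    rw [hU e he f hf, norm_apply_add_eq_norm_add_apply h0 h1 he hf]
  · rintro _ ⟨x, hx, rfl⟩
    obtain ⟨e, he, f, hf, rfl⟩ := (hD₁ x).mp hx
    exact hU e he f hf ▸ (hD₀ _).mpr ⟨e, he, f, hf, rfl⟩
  · obtain ⟨e, he, f, hf, rfl⟩ := (hD₀ y).mp hy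
    exact ⟨W₁ e + f, (hD₁ _).mpr ⟨e, he, f, hf, rfl⟩, hU e he f hf⟩
end
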